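/- arXiv:2409.14980 — 3 statements merged into one kernel-verified Lean document; each statement's English description precedes it below -/
import Mathlib

section
/- Let μ and π be probability measures on a measurable space with μ ≪ π and dμ/dπ − 1 ∈ L²(π). Then the χ²-divergence admits the variational representation χ²(μ‖π) = sup over h ∈ L²(π) of [∫ h dμ − ∫ (h + h²/4) dπ], and the supremum is attained at h* = 2(dμ/dπ − 1). (Each integral ∫ h dμ = ∫ h·(dμ/dπ) dπ is well defined since dμ/dπ ∈ L²(π) and h ∈ L²(π).) -/
/-!
Writing `f = dμ/dπ`, we have `∫ h dμ = ∫ f h dπ`, and pointwise completing the square gives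
`f h - (h + h²/4) = (f - 1)² - (f - 1 - h/2)²`. Integrating, the objective at `h` falls short of
`χ²(μ‖π) = ∫ (f - 1)² dπ` by exactly `∫ (f - 1 - h/2)² dπ ≥ 0`, which vanishes at `h = 2 (f - 1)`.
-/

open MeasureTheory

lemma integral_sub_integral_add_sq_div_four_eq_sub_integral_sq {α : Type*} [MeasurableSpace α]
    {μ π : Measure α} [SigmaFinite μ] [IsFiniteMeasure π] (hμπ : μ ≪ π)
    (hL2 : MemLp (fun x => (μ.rnDeriv π x).toReal - 1) 2 π) {h : α → ℝ} (hh : MemLp h 2 π) :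
    (∫ x, h x ∂μ) - ∫ x, (h x + h x ^ 2 / 4) ∂π
      = (∫ x, ((μ.rnDeriv π x).toReal - 1) ^ 2 ∂π)
        - ∫ x, ((μ.rnDeriv π x).toReal - 1 - h x / 2) ^ 2 ∂π := by
  set f : α → ℝ := fun x => (μ.rnDeriv π x).toReal
  have hf : MemLp f 2 π := by
    convert hL2.add (memLp_const (1 : ℝ)) using 1
    ext x
    simp [f]
  have hfh : Integrable (fun x => f x * h x) π := hf.integrable_mul hh
  have hh_sq : Integrable (fun x => h x + h x ^ 2 / 4) π :=
    (hh.integrable one_le_two).add (hh.integrable_sq.div_const 4)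
  have hgap : MemLp (fun x => f x - 1 - h x / 2) 2 π := hL2.sub (hh.mul_const 2⁻¹)
  rw [← integral_toReal_rnDeriv_mul hμπ, ← integral_sub hfh hh_sq,
    ← integral_sub hL2.integrable_sq hgap.integrable_sq]
  exact integral_congr_ae (Filter.Eventually.of_forall fun x => by ring)

/-- **Variational representation of the χ²-divergence.**
For probability measures `μ ≪ π` with `dμ/dπ − 1 ∈ L²(π)`, the χ²-divergence
`χ²(μ‖π) = ∫ (dμ/dπ − 1)² dπ` satisfies
`χ²(μ‖π) = sup_{h ∈ L²(π)} [∫ h dμ − ∫ (h + h²/4) dπ]`,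
and the supremum is attained at `h* = 2 (dμ/dπ − 1)`. -/
theorem stmt0 {α : Type*} [MeasurableSpace α] (μ π : Measure α)
    [IsProbabilityMeasure μ] [IsProbabilityMeasure π] (hμπ : μ ≪ π)
    (hL2 : MemLp (fun x => (μ.rnDeriv π x).toReal - 1) 2 π) :
    (∀ h : α → ℝ, MemLp h 2 π →
      (∫ x, h x ∂μ) - ∫ x, (h x + (h x) ^ 2 / 4) ∂π
        ≤ ∫ x, ((μ.rnDeriv π x).toReal - 1) ^ 2 ∂π) ∧
    ((∫ x, 2 * ((μ.rnDeriv π x).toReal - 1) ∂μ)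
        - ∫ x, (2 * ((μ.rnDeriv π x).toReal - 1)
            + (2 * ((μ.rnDeriv π x).toReal - 1)) ^ 2 / 4) ∂π
      = ∫ x, ((μ.rnDeriv π x).toReal - 1) ^ 2 ∂π) := by
  refine ⟨fun h hh => ?_, ?_⟩
  · rw [integral_sub_integral_add_sq_div_four_eq_sub_integral_sq hμπ hL2 hh]
    exact sub_le_self _ (integral_nonneg fun x => sq_nonneg _)
  · rw [integral_sub_integral_add_sq_div_four_eq_sub_integral_sq hμπ hL2 (hL2.const_mul 2)]
    simp
end

section
/- Let π be a probability measure on ℝ^d, let k : ℝ^d × ℝ^d → ℝ be a symmetric, continuous, bounded, positive semi-definite kernel, and let T_π be the associated integral operator (a bounded, self-adjoint, positive operator on L²(π)). Let μ ≪ π be a probability measure with f := dμ/dπ − 1 ∈ L²(π), and for λ > 0 set DrMMD_λ(μ‖π) := (1+λ)⟨T_π (T_π + λI)⁻¹ f, f⟩_{L²(π)}. Then lim_{λ→∞} DrMMD_λ(μ‖π) = ⟨T_π f, f⟩_{L²(π)} = MMD²(μ‖π). If in addition T_π is injective (which holds when k is c₀-universal), then lim_{λ→0⁺} DrMMD_λ(μ‖π)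 = ‖f‖²_{L²(π)} = χ²(μ‖π). -/
open MeasureTheory Filter Topology
open scoped ENNReal RealInnerProductSpace

lemma coercive_isUnit {H : Type*} [NormedAddCommGroup H] [InnerProductSpace ℝ H] [CompleteSpace H]
    (A : H →L[ℝ] H) {c : ℝ} (hc : 0 < c)
    (hcoer : ∀ v, c * (‖v‖ * ‖v‖) ≤ ⟪A v, v⟫) :
    IsUnit A ∧ ∀ u : H, ‖Ring.inverse A u‖ ≤ c⁻¹ * ‖u‖ := by
  have key : ∀ a b : ℝ, c * a ≤ b → a ≤ c⁻¹ * b := by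
    intro a b h
    rw [inv_mul_eq_div, le_div_iff₀ hc, mul_comm]
    exact h
  have hanti : ∀ v, c * ‖v‖ ≤ ‖A v‖ := by
    intro v
    rcases eq_or_ne v 0 with rfl | hv
    · simp
    · have h1 : c * (‖v‖ * ‖v‖) ≤ ‖A v‖ * ‖v‖ :=
        (hcoer v).trans (real_inner_le_norm _ _)
      have hvpos : 0 < ‖v‖ := norm_pos_iff.mpr hv
      rw [mul_comm ‖v‖ ‖v‖, ← mul_assoc] at h1
      exact le_of_mul_le_mul_right h1 hvpos
  have hinj : Function.Injective A := by
    intro x y hxy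
    have : A (x - y) = 0 := by simp [map_sub, hxy]
    have h2 := hanti (x - y)
    rw [this, norm_zero] at h2
    have : ‖x - y‖ ≤ 0 := by nlinarith [norm_nonneg (x - y)]
    have := le_antisymm this (norm_nonneg _)
    rwa [norm_eq_zero, sub_eq_zero] at this
  have hclosed : IsClosed (Set.range A) := by
    have halw : AntilipschitzWith ⟨c⁻¹, by positivity⟩ A := by
      apply ContinuousLinearMap.antilipschitz_of_bound
      intro x
      have := hanti x
      change ‖x‖ ≤ c⁻¹ * ‖A x‖
      exact key _ _ (hanti x)
    exact halw.isClosed_range A.uniformContinuous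
  have hrange : LinearMap.range (A : H →ₗ[ℝ] H) = ⊤ := by
    have hKclosed : IsClosed ((LinearMap.range (A : H →ₗ[ℝ] H) : Submodule ℝ H) : Set H) := hclosed
    have horth : (LinearMap.range (A : H →ₗ[ℝ] H))ᗮ = ⊥ := by
      rw [Submodule.eq_bot_iff]
      intro w hw
      have hAw : ⟪A w, w⟫ = 0 := hw (A w) (LinearMap.mem_range_self _ w)
      have := hcoer w
      rw [hAw] at this
      by_contra hw0
      have h0 : 0 < ‖w‖ := norm_pos_iff.mpr hw0
      nlinarith [mul_pos hc (mul_pos h0 h0)]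
    have := Submodule.topologicalClosure_eq_top_iff (K := LinearMap.range (A : H →ₗ[ℝ] H))
    have htop : (LinearMap.range (A : H →ₗ[ℝ] H)).topologicalClosure = ⊤ := this.mpr horth
    have hle : (LinearMap.range (A : H →ₗ[ℝ] H)).topologicalClosure ≤ LinearMap.range (A : H →ₗ[ℝ] H) :=
      Submodule.topologicalClosure_minimal _ le_rfl hKclosed
    exact le_antisymm le_top (htop ▸ hle)
  have hbij : Function.Bijective A :=
    ⟨hinj, fun y => by
      obtain ⟨x, hx⟩ := (LinearMap.range_eq_top.mp hrange) y
      exact ⟨x, hx⟩⟩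
  have hunit : IsUnit A := ContinuousLinearMap.isUnit_iff_bijective.mpr hbij
  refine ⟨hunit, fun u => ?_⟩
  set v := Ring.inverse A u with hv
  have hAv : A v = u := by
    have := Ring.mul_inverse_cancel A hunit
    calc A v = (A * Ring.inverse A) u := rfl
    _ = u := by rw [this]; rfl
  have h1 : c * (‖v‖ * ‖v‖) ≤ ‖u‖ * ‖v‖ := by
    calc c * (‖v‖ * ‖v‖) ≤ ⟪A v, v⟫ := hcoer v
    _ = ⟪u, v⟫ := by rw [hAv]
    _ ≤ ‖u‖ * ‖v‖ := real_inner_le_norm _ _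
  rcases eq_or_lt_of_le (norm_nonneg v) with h0 | h0
  · rw [← h0]; positivity
  · have h2 : c * ‖v‖ ≤ ‖u‖ := by
      have h3 : c * ‖v‖ * ‖v‖ ≤ ‖u‖ * ‖v‖ := by nlinarith [h1]
      exact le_of_mul_le_mul_right h3 h0
    exact key _ _ h2

lemma drmmd_limits{H : Type*} [NormedAddCommGroup H] [InnerProductSpace ℝ H] [CompleteSpace H]
    (T : H →L[ℝ] H) (hTsa : IsSelfAdjoint T) (hTpos : ∀ g, 0 ≤ ⟪T g, g⟫) (f : H) :
    Tendsto (fun l : ℝ => (1 + l) * ⟪(T.comp (Ring.inverse (T + l • 1))) f, f⟫)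
        atTop (𝓝 ⟪T f, f⟫) ∧
    (Function.Injective T →
      Tendsto (fun l : ℝ => (1 + l) * ⟪(T.comp (Ring.inverse (T + l • 1))) f, f⟫)
        (𝓝[>] (0 : ℝ)) (𝓝 (‖f‖ ^ 2))) := by
  -- coercivity of T + l•1 for l > 0
  have hco : ∀ l : ℝ, 0 < l → ∀ v : H, l * (‖v‖ * ‖v‖) ≤ ⟪(T + l • 1) v, v⟫ := by
    intro l hl v
    have : (T + l • (1 : H →L[ℝ] H)) v = T v + l • v := by
      simp [ContinuousLinearMap.add_apply, ContinuousLinearMap.smul_apply,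
        ContinuousLinearMap.one_apply]
    rw [this, inner_add_left, real_inner_smul_left, real_inner_self_eq_norm_mul_norm]
    linarith [hTpos v]
  have hU : ∀ l : ℝ, 0 < l → IsUnit (T + l • (1 : H →L[ℝ] H)) :=
    fun l hl => (coercive_isUnit _ hl (hco l hl)).1
  have hRb : ∀ l : ℝ, 0 < l → ∀ u : H,
      ‖Ring.inverse (T + l • (1 : H →L[ℝ] H)) u‖ ≤ l⁻¹ * ‖u‖ :=
    fun l hl => (coercive_isUnit _ hl (hco l hl)).2
  set R : ℝ → H →L[ℝ] H := fun l => Ring.inverse (T + l • 1) with hR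
  have hAR : ∀ l : ℝ, 0 < l → ∀ x : H, (T + l • (1 : H →L[ℝ] H)) (R l x) = x := by
    intro l hl x
    have := Ring.mul_inverse_cancel _ (hU l hl)
    calc (T + l • (1 : H →L[ℝ] H)) (R l x)
        = ((T + l • 1) * Ring.inverse (T + l • 1)) x := rfl
      _ = x := by rw [this]; rfl
  have hRA : ∀ l : ℝ, 0 < l → ∀ x : H, R l ((T + l • (1 : H →L[ℝ] H)) x) = x := by
    intro l hl x
    have := Ring.inverse_mul_cancel _ (hU l hl)
    calc R l ((T + l • (1 : H →L[ℝ] H)) x)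
        = (Ring.inverse (T + l • 1) * (T + l • 1)) x := rfl
      _ = x := by rw [this]; rfl
  set u : ℝ → H := fun l => R l f with hu
  -- rewrite the main expression
  have hexpr : ∀ l : ℝ, (1 + l) * ⟪(T.comp (Ring.inverse (T + l • 1))) f, f⟫
      = ⟪T ((1 + l) • u l), f⟫ := by
    intro l
    rw [_root_.map_smul, real_inner_smul_left]
    rfl
  constructor
  · -- atTop limit
    have h2 : ∀ l : ℝ, 0 < l → ‖(1 + l) • u l - f‖ ≤ l⁻¹ * ‖f - T f‖ := by
      intro l hl
      have key : (1 + l) • u l - f = R l (f - T f) := by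
        have e1 : R l ((T + l • (1 : H →L[ℝ] H)) f) = f := hRA l hl f
        have e2 : (1 + l) • u l - f = R l ((1 + l) • f) - R l ((T + l • 1) f) := by
          rw [e1, _root_.map_smul]
        rw [e2, ← map_sub]
        congr 1
        have : (T + l • (1 : H →L[ℝ] H)) f = T f + l • f := by
          simp [ContinuousLinearMap.add_apply, ContinuousLinearMap.smul_apply,
            ContinuousLinearMap.one_apply]
        rw [this, add_smul, one_smul]
        abel
      rw [key]
      exact hRb l hl _
    have htend : Tendsto (fun l : ℝ => (1 + l) • u l) atTop (𝓝 f) := by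
      rw [tendsto_iff_norm_sub_tendsto_zero]
      refine squeeze_zero' ?_ ?_ (g := fun l : ℝ => l⁻¹ * ‖f - T f‖) ?_
      · filter_upwards with l using norm_nonneg _
      · filter_upwards [eventually_gt_atTop (0 : ℝ)] with l hl using h2 l hl
      · simpa using tendsto_inv_atTop_zero.mul_const ‖f - T f‖
    have hcont : Continuous fun v : H => ⟪T v, f⟫ :=
      T.continuous.inner continuous_const
    exact Tendsto.congr (fun l => (hexpr l).symm) ((hcont.tendsto f).comp htend)
  · -- 0+ limit
    intro hinj
    -- density of the range of T
    have hdense : Dense (Set.range T) := by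
      have horth : (LinearMap.range (T : H →ₗ[ℝ] H))ᗮ = ⊥ := by
        rw [Submodule.eq_bot_iff]
        intro w hw
        have hsymm : ∀ a b : H, ⟪T a, b⟫ = ⟪a, T b⟫ := fun a b => hTsa.isSymmetric a b
        have hTw : T w = 0 := by
          apply ext_inner_right ℝ
          intro x
          rw [hsymm w x, real_inner_comm, inner_zero_left]
          exact hw (T x) (LinearMap.mem_range_self _ x)
        have : T w = T 0 := by simp [hTw]
        exact hinj this
      have htop : (LinearMap.range (T : H →ₗ[ℝ] H)).topologicalClosure = ⊤ :=
        Submodule.topologicalClosure_eq_top_iff.mpr horth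
      have hd : Dense ((LinearMap.range (T : H →ₗ[ℝ] H) : Submodule ℝ H) : Set H) :=
        Submodule.dense_iff_topologicalClosure_eq_top.mpr htop
      have : ((LinearMap.range (T : H →ₗ[ℝ] H) : Submodule ℝ H) : Set H) = Set.range T := by
        ext x; simp [LinearMap.mem_range]
      rwa [this] at hd
    -- key: l • u l → 0
    have hkey : Tendsto (fun l : ℝ => l • u l) (𝓝[>] (0:ℝ)) (𝓝 0) := by
      rw [Metric.tendsto_nhdsWithin_nhds]
      intro ε hε
      obtain ⟨b, hbmem, hbd⟩ := Metric.mem_closure_iff.mp (hdense f) (ε / 2) (by positivity)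
      obtain ⟨h0, rfl⟩ := hbmem
      refine ⟨ε / (4 * (‖h0‖ + 1)), by positivity, ?_⟩
      intro l hl hld
      have hl' : (0 : ℝ) < l := hl
      rw [Real.dist_eq, sub_zero, abs_of_pos hl'] at hld
      rw [dist_eq_norm, sub_zero]
      have hln : l ≠ 0 := ne_of_gt hl'
      -- R l (T h0) = h0 - l • R l h0
      have hRTh : R l (T h0) = h0 - l • R l h0 := by
        have e1 : (T + l • (1 : H →L[ℝ] H)) (h0 - l • R l h0) = T h0 := by
          rw [map_sub, _root_.map_smul, hAR l hl' h0]
          simp only [ContinuousLinearMap.add_apply, ContinuousLinearMap.smul_apply,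
            ContinuousLinearMap.one_apply]
          abel
        calc R l (T h0) = R l ((T + l • (1 : H →L[ℝ] H)) (h0 - l • R l h0)) := by rw [e1]
          _ = h0 - l • R l h0 := hRA l hl' _
      have hdecomp : l • u l = l • R l (f - T h0) + (l • h0 - (l * l) • R l h0) := by
        have : u l = R l (f - T h0) + R l (T h0) := by
          rw [← map_add, sub_add_cancel]
        rw [this, hRTh, smul_add, smul_sub, smul_smul]
      have hb1 : ‖l • R l (f - T h0)‖ ≤ ε / 2 := by
        rw [norm_smul, Real.norm_eq_abs, abs_of_pos hl']
        calc l * ‖R l (f - T h0)‖ ≤ l * (l⁻¹ * ‖f - T h0‖) :=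
              mul_le_mul_of_nonneg_left (hRb l hl' _) hl'.le
          _ = ‖f - T h0‖ := by field_simp
          _ ≤ ε / 2 := by rw [← dist_eq_norm]; exact hbd.le
      have hb2 : ‖l • h0 - (l * l) • R l h0‖ ≤ 2 * l * ‖h0‖ := by
        calc ‖l • h0 - (l * l) • R l h0‖ ≤ ‖l • h0‖ + ‖(l * l) • R l h0‖ := norm_sub_le _ _
          _ ≤ l * ‖h0‖ + (l * l) * (l⁻¹ * ‖h0‖) := by
              rw [norm_smul, norm_smul, Real.norm_eq_abs, Real.norm_eq_abs,
                abs_of_pos hl', abs_of_pos (mul_pos hl' hl')]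
              exact add_le_add (le_refl _)
                (mul_le_mul_of_nonneg_left (hRb l hl' h0) (mul_pos hl' hl').le)
          _ = 2 * l * ‖h0‖ := by field_simp; ring
      have h2l : 2 * l * ‖h0‖ < ε / 2 := by
        have hh1 : (0:ℝ) < ‖h0‖ + 1 := by positivity
        rw [lt_div_iff₀ (by positivity : (0:ℝ) < 4 * (‖h0‖ + 1))] at hld
        nlinarith [norm_nonneg h0]
      calc ‖l • u l‖ ≤ ‖l • R l (f - T h0)‖ + ‖l • h0 - (l * l) • R l h0‖ := by
            rw [hdecomp]; exact norm_add_le _ _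
        _ < ε / 2 + ε / 2 := by
            have := lt_of_le_of_lt hb2 h2l
            linarith [hb1]
        _ = ε := by ring
    -- assemble
    have hconst : Tendsto (fun l : ℝ => 1 + l) (𝓝[>] (0:ℝ)) (𝓝 1) := by
      have h1 : Tendsto (fun l : ℝ => 1 + l) (𝓝 (0:ℝ)) (𝓝 (1 + 0)) :=
        (continuous_const.add continuous_id).tendsto 0
      rw [add_zero] at h1
      exact h1.mono_left nhdsWithin_le_nhds
    have hinner : Tendsto (fun l : ℝ => ⟪l • u l, f⟫) (𝓝[>] (0:ℝ)) (𝓝 0) := by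
      have hcont2 : Continuous fun v : H => ⟪v, f⟫ := continuous_id.inner continuous_const
      have := (hcont2.tendsto 0).comp hkey
      rw [inner_zero_left] at this
      exact this
    have hmain : Tendsto (fun l : ℝ => (1 + l) * (⟪f, f⟫ - ⟪l • u l, f⟫)) (𝓝[>] (0:ℝ))
        (𝓝 (1 * (⟪f, f⟫ - 0))) := hconst.mul (tendsto_const_nhds.sub hinner)
    have hval : (1:ℝ) * (⟪f, f⟫ - 0) = ‖f‖ ^ 2 := by
      rw [real_inner_self_eq_norm_sq]; ring
    rw [hval] at hmain
    refine Tendsto.congr' ?_ hmain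
    filter_upwards [self_mem_nhdsWithin] with l hl
    have hl' : (0 : ℝ) < l := hl
    have hTu : T (u l) = f - l • u l := by
      have e1 := hAR l hl' f
      have e2 : T (u l) + l • u l = f := by
        rw [← e1]
        simp only [ContinuousLinearMap.add_apply, ContinuousLinearMap.smul_apply,
          ContinuousLinearMap.one_apply]
        rfl
      rw [← e2]; abel
    have : (T.comp (Ring.inverse (T + l • 1))) f = T (u l) := rfl
    rw [this, hTu, inner_sub_left]

lemma mmd_chi2 {d : ℕ} (π : Measure (Fin d → ℝ)) [IsProbabilityMeasure π]
    (k : (Fin d → ℝ) → (Fin d → ℝ) → ℝ)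
    (hksymm : ∀ x y, k x y = k y x)
    (hkcont : Continuous (Function.uncurry k))
    (hkbdd : ∃ C : ℝ, ∀ x y, |k x y| ≤ C)
    (T : Lp ℝ 2 π →L[ℝ] Lp ℝ 2 π)
    (hTint : ∀ g : Lp ℝ 2 π, ⇑(T g) =ᵐ[π] fun y => ∫ x, k x y * g x ∂π)
    (μ : Measure (Fin d → ℝ)) [IsProbabilityMeasure μ] (hμπ : μ ≪ π)
    (f : Lp ℝ 2 π)
    (hf : ⇑f =ᵐ[π] fun x => (μ.rnDeriv π x).toReal - 1) :
    ⟪T f, f⟫ = (∫ x, ∫ y, k x y ∂μ ∂μ) - 2 * (∫ x, ∫ y, k x y ∂π ∂μ)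
      + (∫ x, ∫ y, k x y ∂π ∂π) ∧
    ‖f‖ ^ 2 = ∫ x, ((μ.rnDeriv π x).toReal - 1) ^ 2 ∂π := by
  obtain ⟨C, hC⟩ := hkbdd
  have hC0 : 0 ≤ C := le_trans (abs_nonneg _) (hC 0 0)
  set φ : (Fin d → ℝ) → ℝ := fun x => (μ.rnDeriv π x).toReal with hφ
  have hφm : Measurable φ := (Measure.measurable_rnDeriv μ π).ennreal_toReal
  haveI : μ.HaveLebesgueDecomposition π := Measure.haveLebesgueDecomposition_of_finiteMeasure
  have hfint : Integrable (⇑f) π :=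
    (Lp.memLp f).integrable (by norm_num)
  -- integrability of bounded measurable functions
  have hbint : ∀ (ν : Measure (Fin d → ℝ)) (_ : IsFiniteMeasure ν) (g : (Fin d → ℝ) → ℝ)
      (B : ℝ), Measurable g → (∀ x, |g x| ≤ B) → Integrable g ν := by
    intro ν hν g B hgm hgB
    exact (integrable_const B).mono' hgm.aestronglyMeasurable
      (ae_of_all _ fun x => by simpa [Real.norm_eq_abs] using hgB x)
  have hky : ∀ y, Measurable fun x => k x y := by
    intro y
    exact (hkcont.comp (continuous_id.prodMk continuous_const)).measurable
  -- the rnDeriv transfer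
  have hRD : ∀ g : (Fin d → ℝ) → ℝ, ∫ x, φ x * g x ∂π = ∫ x, g x ∂μ := by
    intro g
    simpa [smul_eq_mul] using MeasureTheory.integral_rnDeriv_smul (f := g) hμπ
  -- Step B : inner integral
  have hstepB : ∀ y, ∫ x, k x y * f x ∂π = (∫ x, k x y ∂μ) - ∫ x, k x y ∂π := by
    intro y
    have h1 : ∫ x, k x y * f x ∂π = ∫ x, k x y * (φ x - 1) ∂π := by
      apply integral_congr_ae
      filter_upwards [hf] with x hx
      rw [hx]
    have hkint : Integrable (fun x => k x y) π := hbint π inferInstance _ C (hky y) (fun x => hC x y)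
    have hkintμ : Integrable (fun x => k x y) μ := hbint μ inferInstance _ C (hky y) (fun x => hC x y)
    have hφk : Integrable (fun x => φ x * k x y) π := by
      have := (MeasureTheory.integrable_rnDeriv_smul_iff (f := fun x => k x y) hμπ).mpr hkintμ
      simpa [smul_eq_mul] using this
    rw [h1]
    have h2 : ∀ x, k x y * (φ x - 1) = φ x * k x y - k x y := fun x => by ring
    simp_rw [h2]
    rw [integral_sub hφk hkint, hRD (fun x => k x y)]
  -- Step A : inner product as double integral
  have hstepA : ⟪T f, f⟫ = ∫ y, ((∫ x, k x y ∂μ) - ∫ x, k x y ∂π) * f y ∂π := by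
    rw [L2.inner_def]
    apply integral_congr_ae
    filter_upwards [hTint f] with y hy
    rw [RCLike.inner_apply, hy, hstepB y]
    simp
    ring
  -- measurability of the parametric integrals
  have hswapm : StronglyMeasurable fun p : (Fin d → ℝ) × (Fin d → ℝ) => k p.2 p.1 :=
    (hkcont.comp continuous_swap).stronglyMeasurable
  have hImeas : ∀ (ν : Measure (Fin d → ℝ)) (_ : SFinite ν),
      StronglyMeasurable fun y => ∫ x, k x y ∂ν := by
    intro ν hν
    exact hswapm.integral_prod_right'
  have hIbdd : ∀ (ν : Measure (Fin d → ℝ)) (_ : IsProbabilityMeasure ν) (y : Fin d → ℝ),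
      |∫ x, k x y ∂ν| ≤ C := by
    intro ν hν y
    calc |∫ x, k x y ∂ν| ≤ ∫ x, |k x y| ∂ν := by
          simpa [Real.norm_eq_abs] using norm_integral_le_integral_norm (fun x => k x y)
      _ ≤ ∫ _x, C ∂ν := by
          apply integral_mono_of_nonneg (ae_of_all _ fun x => abs_nonneg _)
            (integrable_const C) (ae_of_all _ fun x => hC x y)
      _ = C := by simp
  set g : (Fin d → ℝ) → ℝ := fun y => (∫ x, k x y ∂μ) - ∫ x, k x y ∂π with hg
  have hgm : Measurable g :=
    ((hImeas μ inferInstance).measurable.sub (hImeas π inferInstance).measurable)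
  have hgb : ∀ y, |g y| ≤ C + C := fun y =>
    (abs_sub _ _).trans (add_le_add (hIbdd μ inferInstance y) (hIbdd π inferInstance y))
  -- Step C
  have hstepC : ⟪T f, f⟫ = (∫ y, g y ∂μ) - ∫ y, g y ∂π := by
    rw [hstepA]
    have h1 : ∫ y, g y * f y ∂π = ∫ y, g y * (φ y - 1) ∂π := by
      apply integral_congr_ae
      filter_upwards [hf] with y hy
      rw [hy]
    have hgπ : Integrable g π := hbint π inferInstance g (C + C) hgm hgb
    have hgμ : Integrable g μ := hbint μ inferInstance g (C + C) hgm hgb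
    have hφg : Integrable (fun y => φ y * g y) π := by
      have := (MeasureTheory.integrable_rnDeriv_smul_iff (f := g) hμπ).mpr hgμ
      simpa [smul_eq_mul] using this
    rw [h1]
    have h2 : ∀ y, g y * (φ y - 1) = φ y * g y - g y := fun y => by ring
    simp_rw [h2]
    rw [integral_sub hφg hgπ, hRD g]
  -- Step D : expand
  have hIμint : ∀ (ν : Measure (Fin d → ℝ)) (_ : IsProbabilityMeasure ν)
      (ρ : Measure (Fin d → ℝ)) (_ : IsProbabilityMeasure ρ),
      Integrable (fun y => ∫ x, k x y ∂ν) ρ := by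
    intro ν hν ρ hρ
    exact hbint ρ inferInstance _ C (hImeas ν inferInstance).measurable (hIbdd ν inferInstance)
  have hexp : ∀ (ρ : Measure (Fin d → ℝ)) (_ : IsProbabilityMeasure ρ),
      ∫ y, g y ∂ρ = (∫ y, ∫ x, k x y ∂μ ∂ρ) - ∫ y, ∫ x, k x y ∂π ∂ρ := by
    intro ρ hρ
    exact integral_sub (hIμint μ inferInstance ρ inferInstance)
      (hIμint π inferInstance ρ inferInstance)
  -- symmetry renames
  have hsym : ∀ (ν ρ : Measure (Fin d → ℝ)),
      (∫ y, ∫ x, k x y ∂ν ∂ρ) = ∫ x, ∫ y, k x y ∂ν ∂ρ := by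
    intro ν ρ
    apply integral_congr_ae
    apply ae_of_all
    intro y
    apply integral_congr_ae
    apply ae_of_all
    intro x
    exact hksymm x y
  -- Fubini for the cross term
  have hkprod : Integrable (Function.uncurry k) (μ.prod π) := by
    apply (integrable_const C).mono' hkcont.aestronglyMeasurable
    apply ae_of_all
    intro p
    simpa [Real.norm_eq_abs, Function.uncurry] using hC p.1 p.2
  have hfub : ∫ x, ∫ y, k x y ∂π ∂μ = ∫ y, ∫ x, k x y ∂μ ∂π :=
    integral_integral_swap hkprod
  constructor
  · rw [hstepC, hexp μ inferInstance, hexp π inferInstance,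
      hsym μ μ, hsym π μ, hsym π π, ← hfub]
    ring
  · rw [← real_inner_self_eq_norm_sq, L2.inner_def]
    apply integral_congr_ae
    filter_upwards [hf] with x hx
    rw [RCLike.inner_apply, hx]
    simp [sq]

/-- **Interpolation property of the de-regularized MMD.**
With `T_π` the integral operator of a symmetric continuous bounded positive semi-definite
kernel (a bounded self-adjoint positive operator on `L²(π)`), `f = dμ/dπ − 1 ∈ L²(π)` and
`DrMMD_λ(μ‖π) = (1+λ)⟨T_π (T_π+λI)⁻¹ f, f⟩`, one has
`DrMMD_λ → ⟨T_π f, f⟩ = MMD²(μ‖π)` as `λ → ∞`, and if `T_π` is injective then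
`DrMMD_λ → ‖f‖² = χ²(μ‖π)` as `λ → 0⁺`. -/
theorem stmt4 {d : ℕ} (π : Measure (Fin d → ℝ)) [IsProbabilityMeasure π]
    (k : (Fin d → ℝ) → (Fin d → ℝ) → ℝ)
    (hksymm : ∀ x y, k x y = k y x)
    (hkcont : Continuous (Function.uncurry k))
    (hkbdd : ∃ C : ℝ, ∀ x y, |k x y| ≤ C)
    (hkpsd : ∀ (n : ℕ) (x : Fin n → Fin d → ℝ) (c : Fin n → ℝ),
      0 ≤ ∑ i, ∑ j, c i * c j * k (x i) (x j))
    (T : Lp ℝ 2 π →L[ℝ] Lp ℝ 2 π)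
    (hTint : ∀ g : Lp ℝ 2 π, ⇑(T g) =ᵐ[π] fun y => ∫ x, k x y * g x ∂π)
    (hTsa : IsSelfAdjoint T) (hTpos : ∀ g : Lp ℝ 2 π, 0 ≤ ⟪T g, g⟫)
    (μ : Measure (Fin d → ℝ)) [IsProbabilityMeasure μ] (hμπ : μ ≪ π)
    (f : Lp ℝ 2 π)
    (hf : ⇑f =ᵐ[π] fun x => (μ.rnDeriv π x).toReal - 1) :
    Tendsto (fun l : ℝ => (1 + l) * ⟪(T.comp (Ring.inverse (T + l • 1))) f, f⟫)
      atTop (𝓝 ⟪T f, f⟫) ∧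
    ⟪T f, f⟫ = (∫ x, ∫ y, k x y ∂μ ∂μ) - 2 * (∫ x, ∫ y, k x y ∂π ∂μ)
      + (∫ x, ∫ y, k x y ∂π ∂π) ∧
    (Function.Injective T →
      Tendsto (fun l : ℝ => (1 + l) * ⟪(T.comp (Ring.inverse (T + l • 1))) f, f⟫)
        (𝓝[>] (0 : ℝ)) (𝓝 (‖f‖ ^ 2))) ∧
    ‖f‖ ^ 2 = ∫ x, ((μ.rnDeriv π x).toReal - 1) ^ 2 ∂π := by
  obtain ⟨part1, part3⟩ := drmmd_limits T hTsa hTpos f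
  obtain ⟨part2, part4⟩ := mmd_chi2 π k hksymm hkcont hkbdd T hTint μ hμπ f hf
  exact ⟨part1, part2, part3, part4⟩
end

section
/- Let π be a probability measure on ℝ^d, let k : ℝ^d × ℝ^d → ℝ be a symmetric, continuous, positive semi-definite kernel with sup_x k(x,x) ≤ K (hence the integral operator T_π is bounded, self-adjoint, positive with operator norm at most K). Then for every λ > 0 and every f ∈ L²(π): ((1+λ)/(K+λ)) ⟨T_π f, f⟩ ≤ (1+λ) ⟨T_π (T_π + λI)⁻¹ f, f⟩ ≤ ((1+λ)/λ) ⟨T_π f, f⟩. In particular, DrMMD_λ(μ‖π) := (1+λ)⟨T_π (T_π + λI)⁻¹ f, f⟩ with f = dμ/dπ − 1 is nonnegative, and if T_π is injective then DrMMD_λ(μ‖π) = 0 if and only if μ = π. -/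
open MeasureTheory
open scoped ENNReal RealInnerProductSpace

section aux
variable {V : Type*} [NormedAddCommGroup V] [InnerProductSpace ℝ V] [CompleteSpace V]

lemma posOp_symm (T : V →L[ℝ] V) (hsa : IsSelfAdjoint T) (u v : V) :
    ⟪T u, v⟫ = ⟪u, T v⟫ := by
  conv_lhs => rw [← hsa.adjoint_eq]
  exact ContinuousLinearMap.adjoint_inner_left T v u

lemma posOp_cs (T : V →L[ℝ] V) (hsa : IsSelfAdjoint T) (hpos : ∀ g, 0 ≤ ⟪T g, g⟫) (x y : V) :
    ⟪T x, y⟫ ^ 2 ≤ ⟪T x, x⟫ * ⟪T y, y⟫ := by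
  have key : ∀ t : ℝ, 0 ≤ ⟪T y, y⟫ * (t * t) + (2 * ⟪T x, y⟫) * t + ⟪T x, x⟫ := by
    intro t
    have h := hpos (x + t • y)
    have hyx : ⟪T y, x⟫ = ⟪T x, y⟫ := by
      rw [posOp_symm T hsa, real_inner_comm]
    have expand : ⟪T (x + t • y), x + t • y⟫
        = ⟪T x, x⟫ + t * ⟪T x, y⟫ + t * ⟪T y, x⟫ + t * t * ⟪T y, y⟫ := by
      rw [map_add, ContinuousLinearMap.map_smul]
      simp only [inner_add_left, inner_add_right, real_inner_smul_left, real_inner_smul_right]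
      ring
    rw [expand, hyx] at h
    nlinarith
  have := discrim_le_zero key
  rw [discrim] at this
  nlinarith [this]

lemma posOp_isUnit (T : V →L[ℝ] V) (hsa : IsSelfAdjoint T) (hpos : ∀ g, 0 ≤ ⟪T g, g⟫)
    {l : ℝ} (hl : 0 < l) : IsUnit (T + l • (1 : V →L[ℝ] V)) := by
  set A : V →L[ℝ] V := T + l • 1 with hA
  have hAapp : ∀ g : V, A g = T g + l • g := by intro g; simp [hA]
  set B : V →L[ℝ] V →L[ℝ] ℝ := (innerSL ℝ).comp A with hB
  have hBapp : ∀ u v : V, B u v = ⟪A u, v⟫ := fun u v => rfl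
  have hcoercive : IsCoercive B := by
    refine ⟨l, hl, fun u => ?_⟩
    rw [hBapp, hAapp, inner_add_left, real_inner_smul_left, real_inner_self_eq_norm_mul_norm]
    have := hpos u
    nlinarith
  set E := hcoercive.continuousLinearEquivOfBilin with hE
  have hEA : ∀ v : V, (E v : V) = A v := by
    intro v
    refine ext_inner_right ℝ fun w => ?_
    rw [hcoercive.continuousLinearEquivOfBilin_apply]
    exact hBapp v w
  refine ⟨⟨A, E.symm.toContinuousLinearMap, ?_, ?_⟩, rfl⟩
  · refine ContinuousLinearMap.ext fun x => ?_
    rw [ContinuousLinearMap.mul_apply, ContinuousLinearMap.one_apply]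
    show A (E.symm x) = x
    rw [← hEA, E.apply_symm_apply]
  · refine ContinuousLinearMap.ext fun x => ?_
    rw [ContinuousLinearMap.mul_apply, ContinuousLinearMap.one_apply]
    show E.symm (A x) = x
    rw [← hEA, E.symm_apply_apply]

lemma posOp_key (T : V →L[ℝ] V) (hsa : IsSelfAdjoint T) (hpos : ∀ g, 0 ≤ ⟪T g, g⟫)
    {K : ℝ} (hTnorm : ‖T‖ ≤ K) (hK0 : 0 ≤ K) {l : ℝ} (hl : 0 < l) (g : V) :
    (((1 + l) / (K + l)) * ⟪T g, g⟫
        ≤ (1 + l) * ⟪(T.comp (Ring.inverse (T + l • 1))) g, g⟫ ∧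
      (1 + l) * ⟪(T.comp (Ring.inverse (T + l • 1))) g, g⟫ ≤ ((1 + l) / l) * ⟪T g, g⟫) ∧
    0 ≤ ⟪(T.comp (Ring.inverse (T + l • 1))) g, g⟫ ∧
    (Function.Injective T → ⟪(T.comp (Ring.inverse (T + l • 1))) g, g⟫ = 0 → g = 0) := by
  set A : V →L[ℝ] V := T + l • 1 with hA
  have hAapp : ∀ u : V, A u = T u + l • u := by intro u; simp [hA]
  have hUnit : IsUnit A := posOp_isUnit T hsa hpos hl
  set R : V →L[ℝ] V := Ring.inverse A with hRdef
  have hAR : A (R g) = g := by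
    have h1 : A * R = 1 := Ring.mul_inverse_cancel A hUnit
    calc A (R g) = (A * R) g := rfl
    _ = g := by rw [h1]; rfl
  have hsymm := posOp_symm T hsa
  set h := R g with hh
  have hg : g = T h + l • h := (hAR.symm).trans (hAapp (R g))
  have ha : 0 ≤ ⟪T h, h⟫ := hpos h
  have hb : 0 ≤ ⟪T h, T h⟫ := real_inner_self_nonneg
  have hc : 0 ≤ ⟪T (T h), T h⟫ := hpos (T h)
  have hbnorm : ⟪T h, T h⟫ = ‖T h‖ ^ 2 := real_inner_self_eq_norm_sq (T h)
  have hcb : ⟪T (T h), T h⟫ ≤ K * ⟪T h, T h⟫ := by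
    have h1 : ⟪T (T h), T h⟫ ≤ ‖T (T h)‖ * ‖T h‖ := real_inner_le_norm _ _
    have h2 : ‖T (T h)‖ ≤ ‖T‖ * ‖T h‖ := T.le_opNorm _
    have h3 : 0 ≤ ‖T h‖ := norm_nonneg _
    have h4 : 0 ≤ ‖T‖ := norm_nonneg _
    nlinarith
  have hba : ⟪T h, T h⟫ ≤ K * ⟪T h, h⟫ := by
    have hcs := posOp_cs T hsa hpos h (T h)
    rcases eq_or_lt_of_le hb with hb0 | hb0
    · nlinarith
    · nlinarith
  have hTRg : ⟪(T.comp R) g, g⟫ = ⟪T h, T h⟫ + l * ⟪T h, h⟫ := by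
    have e1 : (T.comp R) g = T h := rfl
    rw [e1]
    conv_lhs => rw [hg]
    rw [inner_add_right, real_inner_smul_right]
  have hTg : ⟪T g, g⟫ = ⟪T (T h), T h⟫ + 2 * l * ⟪T h, T h⟫ + l ^ 2 * ⟪T h, h⟫ := by
    conv_lhs => rw [hg]
    rw [map_add, ContinuousLinearMap.map_smul]
    simp only [inner_add_left, inner_add_right, real_inner_smul_left, real_inner_smul_right]
    linear_combination l * hsymm (T h) h
  refine ⟨⟨?_, ?_⟩, ?_, ?_⟩
  · rw [hTRg, hTg, div_mul_eq_mul_div, div_le_iff₀ (by linarith)]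
    nlinarith
  · rw [hTRg, hTg, div_mul_eq_mul_div, le_div_iff₀ hl]
    nlinarith
  · rw [hTRg]; nlinarith
  · intro hinj h0
    rw [hTRg] at h0
    have hb0 : ⟪T h, T h⟫ = 0 := by nlinarith
    have hTh0 : T h = 0 := by
      rw [real_inner_self_eq_norm_sq] at hb0
      simpa using (pow_eq_zero_iff (n := 2) (by norm_num)).mp hb0
    have hh0 : h = 0 := hinj (by rw [hTh0, map_zero])
    rw [hg, hTh0, hh0]
    simp
end aux

/-- **Two-sided bounds for DrMMD, nonnegativity, and the divergence property.**
For the integral operator `T_π` of a symmetric continuous positive semi-definite kernel with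
`sup_x k(x,x) ≤ K` (so `T_π` is bounded self-adjoint positive with `‖T_π‖ ≤ K`), every `λ > 0`
and every `g ∈ L²(π)` satisfy
`((1+λ)/(K+λ))⟨T_π g,g⟩ ≤ (1+λ)⟨T_π(T_π+λI)⁻¹ g,g⟩ ≤ ((1+λ)/λ)⟨T_π g,g⟩`.
In particular `DrMMD_λ(μ‖π) = (1+λ)⟨T_π(T_π+λI)⁻¹ f,f⟩ ≥ 0` with `f = dμ/dπ − 1`, and if
`T_π` is injective then `DrMMD_λ(μ‖π) = 0 ↔ μ = π`. -/
theorem stmt5 {d : ℕ} (π : Measure (Fin d → ℝ)) [IsProbabilityMeasure π]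
    (K : ℝ)
    (k : (Fin d → ℝ) → (Fin d → ℝ) → ℝ)
    (hksymm : ∀ x y, k x y = k y x)
    (hkcont : Continuous (Function.uncurry k))
    (hkpsd : ∀ (n : ℕ) (x : Fin n → Fin d → ℝ) (c : Fin n → ℝ),
      0 ≤ ∑ i, ∑ j, c i * c j * k (x i) (x j))
    (hkK : ∀ x, k x x ≤ K)
    (T : Lp ℝ 2 π →L[ℝ] Lp ℝ 2 π)
    (hTint : ∀ g : Lp ℝ 2 π, ⇑(T g) =ᵐ[π] fun y => ∫ x, k x y * g x ∂π)
    (hTsa : IsSelfAdjoint T) (hTpos : ∀ g : Lp ℝ 2 π, 0 ≤ ⟪T g, g⟫)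
    (hTnorm : ‖T‖ ≤ K)
    (μ : Measure (Fin d → ℝ)) [IsProbabilityMeasure μ] (hμπ : μ ≪ π)
    (f : Lp ℝ 2 π)
    (hf : ⇑f =ᵐ[π] fun x => (μ.rnDeriv π x).toReal - 1)
    (l : ℝ) (hl : 0 < l) :
    (∀ g : Lp ℝ 2 π,
      ((1 + l) / (K + l)) * ⟪T g, g⟫
          ≤ (1 + l) * ⟪(T.comp (Ring.inverse (T + l • 1))) g, g⟫ ∧
      (1 + l) * ⟪(T.comp (Ring.inverse (T + l • 1))) g, g⟫
          ≤ ((1 + l) / l) * ⟪T g, g⟫) ∧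
    0 ≤ (1 + l) * ⟪(T.comp (Ring.inverse (T + l • 1))) f, f⟫ ∧
    (Function.Injective T →
      ((1 + l) * ⟪(T.comp (Ring.inverse (T + l • 1))) f, f⟫ = 0 ↔ μ = π)) := by
  have hK0 : 0 ≤ K := by
    have h1 := hkpsd 1 (fun _ => 0) (fun _ => 1)
    simp at h1
    exact le_trans h1 (hkK 0)
  have key := fun g => posOp_key T hTsa hTpos hTnorm hK0 hl g
  refine ⟨fun g => (key g).1, ?_, ?_⟩
  · have := (key f).2.1
    nlinarith
  · intro hinj
    constructor
    · intro h0
      have hz : ⟪(T.comp (Ring.inverse (T + l • 1))) f, f⟫ = 0 := by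
        have h1 := (key f).2.1
        nlinarith
      have hf0 : f = 0 := (key f).2.2 hinj hz
      have hae : (fun x => (μ.rnDeriv π x).toReal - 1) =ᵐ[π] (0 : (Fin d → ℝ) → ℝ) := by
        have h2 : ⇑f =ᵐ[π] 0 := by
          rw [← Lp.eq_zero_iff_ae_eq_zero]; exact hf0
        exact hf.symm.trans h2
      have hrn : μ.rnDeriv π =ᵐ[π] (fun _ => 1) := by
        filter_upwards [hae, Measure.rnDeriv_lt_top μ π] with x hx hlt
        have hx1 : (μ.rnDeriv π x).toReal = 1 := by
          simp only [Pi.zero_apply] at hx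
          linarith
        exact (ENNReal.toReal_eq_one_iff _).mp hx1
      haveI : μ.HaveLebesgueDecomposition π := Measure.haveLebesgueDecomposition_of_sigmaFinite μ π
      calc μ = π.withDensity (μ.rnDeriv π) := (Measure.withDensity_rnDeriv_eq μ π hμπ).symm
      _ = π.withDensity (fun _ => 1) := withDensity_congr_ae hrn
      _ = π := by simp
    · intro hμeq
      have hrn : μ.rnDeriv π =ᵐ[π] (fun _ => 1) := by
        rw [hμeq]; exact Measure.rnDeriv_self π
      have hf0 : f = 0 := by
        rw [Lp.eq_zero_iff_ae_eq_zero]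
        filter_upwards [hf, hrn] with x hx hx2
        simp [hx, hx2]
      rw [hf0]
      simp
end
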